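/- For every β ∈ ℕ and every fixed q ∈ C_c^∞(ℝ) with support contained in [3/4, 4/3] and q ≡ 1 on [1, 5/4], there exist constants c > 4 and C > 0 such that the following holds. Let λ be a nonzero real number, let a be real with |a| ≥ c, set ν = ia, define g(ξ) = q(ξ)·(ξ^{ν+1} − 1) for ξ > 0 (and g = 0 for ξ ≤ 0), and define f(ξ) = −i·g(ξ)/(λ(ξ − 1)) for ξ ≠ 1, extended smoothly at ξ = 1 (this is possible since g(1) = 0). Then ‖Û^β f‖_{L²(I_ν)} ≥ (C/|λ|)·|a|^{2β + 1/2}, where I_ν = [1, 1 + 1/|a|] and the L² norm is with respect to Lebesgue measure. -/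

import Mathlib

open Complex MeasureTheory

/-- The operator `Û f (ξ) = i((ν−1)·f′(ξ) − ξ·f″(ξ))`. -/
noncomputable def hatU (ν : ℂ) (f : ℝ → ℂ) : ℝ → ℂ :=
  fun ξ => Complex.I * ((ν - 1) * deriv f ξ - (ξ : ℂ) * deriv (deriv f) ξ)

/-- The `L²(J, dξ)` norm (Lebesgue measure), valued in `ℝ≥0∞`. -/
noncomputable def L2 (h : ℝ → ℂ) (J : Set ℝ) : ENNReal :=
  (∫⁻ ξ in J, ENNReal.ofReal (‖h ξ‖ ^ 2)) ^ (1 / 2 : ℝ)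

/-- The function `g(ξ) = q(ξ)·(ξ^{ν+1} − 1)` for `ξ > 0` (and `0` for `ξ ≤ 0`),
where `ν = ia`. -/
noncomputable def gfun (q : ℝ → ℂ) (a : ℝ) : ℝ → ℂ :=
  fun ξ => if 0 < ξ then q ξ * ((ξ : ℂ) ^ (Complex.I * a + 1) - 1) else 0

/-- The solution `f(ξ) = −i·g(ξ)/(λ(ξ−1))`, extended smoothly at `ξ = 1`. -/
noncomputable def ffun (q : ℝ → ℂ) (a lam : ℝ) : ℝ → ℂ :=
  fun ξ => if ξ = 1 then -Complex.I * deriv (gfun q a) 1 / (lam : ℂ)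
    else -Complex.I * gfun q a ξ / ((lam : ℂ) * ((ξ : ℂ) - 1))

/-!
On `(1, 5/4)` we have `q = 1`, hence `f(ξ) = -(i/λ)(ν+1) ∫₀¹ y^ν dτ` with `y = 1 + τ(ξ-1)`.
Differentiating under the integral, `Û` maps `y^s` to
`i s(ν-s) τ y^(s-1) + i s(s-1) τ(1-τ) y^(s-2)`, so
`Û^β f = -(i/λ)(ν+1) ∑_{m ≤ 2β} ∫₀¹ p_m(τ) y^(ν-m) dτ` with weights `p_m = O(|a|^m)`, the top
one being `(τ(1-τ))^β ∏_{j<β} i(ν-2j)(ν-2j-1)`, of size `|a|^(2β)`. For `ξ ∈ I_ν` we have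
`|a log y| ≤ 1`, so `Re y^(ν-2β) ≥ cos 1 / 4^β`: the top term does not cancel and beats the
others by a factor `|a|`. Thus `|Û^β f| ≳ |a|^(2β+1)/|λ|` pointwise on `I_ν`, an interval of
length `1/|a|`.
-/

theorem HasDerivAt.ofReal_cpow_const {φ : ℝ → ℝ} {φ' u : ℝ} (hφ : HasDerivAt φ φ' u)
    (hpos : 0 < φ u) (s : ℂ) :
    HasDerivAt (fun u => (φ u : ℂ) ^ s) (s * (φ u : ℂ) ^ (s - 1) * φ') u :=
  HasDerivAt.comp (h₂ := fun z : ℂ => z ^ s) u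
    (hasStrictDerivAt_cpow_const (ofReal_mem_slitPlane.2 hpos)).hasDerivAt hφ.ofReal_comp

theorem Complex.cpow_add_one {z : ℂ} (hz : z ≠ 0) (s : ℂ) : z ^ (s + 1) = z ^ s * z := by
  rw [cpow_add s 1 hz, cpow_one]

namespace TwistedSolution

open Set Topology

noncomputable def powerAverage (p : ℝ → ℂ) (s : ℂ) (x : ℝ) : ℂ :=
  ∫ τ in (0 : ℝ)..1, p τ * ((1 + τ * (x - 1) : ℝ) : ℂ) ^ s

lemma uIoc_zero_one_subset_Icc : uIoc (0 : ℝ) 1 ⊆ Icc 0 1 :=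
  uIoc_subset_uIcc.trans_eq (uIcc_of_le zero_le_one)

lemma one_add_mul_sub_one_pos {x τ : ℝ} (hx : 0 < x) (hτ : τ ∈ Icc (0 : ℝ) 1) :
    0 < 1 + τ * (x - 1) := by
  rcases le_total x 1 with h | h <;> nlinarith [hτ.1, hτ.2]

lemma continuousOn_powerAverage_integrand {p : ℝ → ℂ} (hp : Continuous p) (s : ℂ) {x : ℝ}
    (hx : 0 < x) :
    ContinuousOn (fun τ : ℝ => p τ * ((1 + τ * (x - 1) : ℝ) : ℂ) ^ s) (Icc 0 1) :=
  hp.continuousOn.mul <| ContinuousOn.cpow_const (by fun_prop)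
    fun _ hτ => ofReal_mem_slitPlane.2 (one_add_mul_sub_one_pos hx hτ)

lemma intervalIntegrable_powerAverage_integrand {p : ℝ → ℂ} (hp : Continuous p) (s : ℂ)
    {x : ℝ} (hx : 0 < x) :
    IntervalIntegrable (fun τ : ℝ => p τ * ((1 + τ * (x - 1) : ℝ) : ℂ) ^ s) volume 0 1 :=
  (continuousOn_powerAverage_integrand hp s hx).intervalIntegrable_of_Icc zero_le_one

lemma powerAverage_zero (s : ℂ) (x : ℝ) : powerAverage 0 s x = 0 := by
  simp [powerAverage]

lemma powerAverage_add {p r : ℝ → ℂ} (hp : Continuous p) (hr : Continuous r) (s : ℂ) {x : ℝ}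
    (hx : 0 < x) :
    powerAverage (fun τ => p τ + r τ) s x = powerAverage p s x + powerAverage r s x := by
  simp only [powerAverage, add_mul]
  exact intervalIntegral.integral_add (intervalIntegrable_powerAverage_integrand hp s hx)
    (intervalIntegrable_powerAverage_integrand hr s hx)

lemma powerAverage_const_mul (c : ℂ) (p : ℝ → ℂ) (s : ℂ) (x : ℝ) :
    powerAverage (fun τ => c * p τ) s x = c * powerAverage p s x := by
  simp only [powerAverage, mul_assoc, intervalIntegral.integral_const_mul]

theorem hasDerivAt_powerAverage {p : ℝ → ℂ} (hp : Continuous p) (s : ℂ) {x₀ : ℝ}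
    (hx₀ : 0 < x₀) :
    HasDerivAt (powerAverage p s) (powerAverage (fun τ => s * τ * p τ) (s - 1) x₀) x₀ := by
  set K := Icc (0 : ℝ) 1 ×ˢ Metric.closedBall x₀ (x₀ / 2)
  have hK : ∀ z ∈ K, 0 < 1 + z.1 * (z.2 - 1) := fun z hz => by
    have := (abs_le.1 (Metric.mem_closedBall.1 hz.2))
    exact one_add_mul_sub_one_pos (by linarith) hz.1
  obtain ⟨M, hM⟩ :=
    (isCompact_Icc.prod (isCompact_closedBall x₀ (x₀ / 2))).exists_bound_of_continuousOn
    (f := fun z : ℝ × ℝ => s * z.1 * p z.1 * ((1 + z.1 * (z.2 - 1) : ℝ) : ℂ) ^ (s - 1))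
    (ContinuousOn.mul (by fun_prop) (ContinuousOn.cpow_const (by fun_prop)
      fun z hz => ofReal_mem_slitPlane.2 (hK z hz)))
  have hball : Metric.ball x₀ (x₀ / 2) ⊆ Ioi 0 := fun x hx => by
    have := abs_lt.1 (Metric.mem_ball.1 hx); simp only [mem_Ioi]; linarith
  refine (intervalIntegral.hasDerivAt_integral_of_dominated_loc_of_deriv_le (bound := fun _ => M)
    (F := fun x τ => p τ * ((1 + τ * (x - 1) : ℝ) : ℂ) ^ s)
    (F' := fun x τ => s * τ * p τ * ((1 + τ * (x - 1) : ℝ) : ℂ) ^ (s - 1))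
    (Metric.ball_mem_nhds x₀ (half_pos hx₀)) ?_
    (intervalIntegrable_powerAverage_integrand hp s hx₀) ?_ ?_ intervalIntegrable_const ?_).2
  · refine Filter.eventually_of_mem (Metric.ball_mem_nhds x₀ (half_pos hx₀)) fun x hx => ?_
    exact ((continuousOn_powerAverage_integrand hp s (hball hx)).mono
      uIoc_zero_one_subset_Icc).aestronglyMeasurable measurableSet_uIoc
  · exact ((continuousOn_powerAverage_integrand (by fun_prop) (s - 1) hx₀).mono
      uIoc_zero_one_subset_Icc).aestronglyMeasurable measurableSet_uIoc
  · exact Filter.Eventually.of_forall fun τ hτ x hx =>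
      hM (τ, x) ⟨uIoc_zero_one_subset_Icc hτ, Metric.ball_subset_closedBall hx⟩
  · refine Filter.Eventually.of_forall fun τ hτ x hx => ?_
    have hτ' : τ ∈ Icc (0 : ℝ) 1 := uIoc_zero_one_subset_Icc hτ
    have hφ : HasDerivAt (fun x : ℝ => 1 + τ * (x - 1)) τ x := by
      simpa using ((hasDerivAt_id x).sub_const 1).const_mul τ |>.const_add 1
    refine ((hφ.ofReal_cpow_const (one_add_mul_sub_one_pos (hball hx) hτ') s).const_mul
      (p τ)).congr_deriv ?_
    ring

lemma eventuallyEq_deriv_powerAverage {p : ℝ → ℂ} (hp : Continuous p) (s : ℂ) {x : ℝ}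
    (hx : 0 < x) :
    deriv (powerAverage p s) =ᶠ[𝓝 x] powerAverage (fun τ => s * τ * p τ) (s - 1) :=
  Filter.mem_of_superset (Ioi_mem_nhds hx) fun _ hy => (hasDerivAt_powerAverage hp s hy).deriv

lemma mul_powerAverage_one (s : ℂ) {x : ℝ} (hx : 0 < x) :
    (s + 1) * ((x : ℂ) - 1) * powerAverage (fun _ => 1) s x = (x : ℂ) ^ (s + 1) - 1 := by
  have hderiv : ∀ τ ∈ uIcc (0 : ℝ) 1,
      HasDerivAt (fun τ : ℝ => ((1 + τ * (x - 1) : ℝ) : ℂ) ^ (s + 1))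
        ((s + 1) * ((x : ℂ) - 1) * (1 * ((1 + τ * (x - 1) : ℝ) : ℂ) ^ s)) τ := by
    intro τ hτ
    have hφ : HasDerivAt (fun τ : ℝ => 1 + τ * (x - 1)) (x - 1) τ := by
      simpa using (hasDerivAt_mul_const (x - 1)).const_add 1
    refine (hφ.ofReal_cpow_const (one_add_mul_sub_one_pos hx (uIcc_of_le (zero_le_one' ℝ) ▸ hτ))
      (s + 1)).congr_deriv ?_
    push_cast
    ring_nf
  rw [powerAverage, ← intervalIntegral.integral_const_mul,
    intervalIntegral.integral_eq_sub_of_hasDerivAt hderiv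
      ((intervalIntegrable_powerAverage_integrand continuous_const s hx).const_mul _)]
  simp

lemma norm_powerAverage_le {p : ℝ → ℂ} {M : ℝ} (hM : ∀ τ ∈ Icc (0 : ℝ) 1, ‖p τ‖ ≤ M) {s : ℂ}
    (hs : s.re ≤ 0) {x : ℝ} (hx : 1 ≤ x) : ‖powerAverage p s x‖ ≤ M := by
  refine (intervalIntegral.norm_integral_le_of_norm_le_const fun τ hτ => ?_).trans_eq
    (by rw [sub_zero, abs_one, mul_one])
  have hτ' : τ ∈ Icc (0 : ℝ) 1 := uIoc_zero_one_subset_Icc hτ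
  have hy : 1 ≤ 1 + τ * (x - 1) := by nlinarith [hτ'.1]
  rw [norm_mul, norm_cpow_eq_rpow_re_of_pos (by linarith)]
  exact (mul_le_of_le_one_right (norm_nonneg _) (Real.rpow_le_one_of_one_le_of_nonpos hy hs)).trans
    (hM τ hτ')

lemma mul_integral_le_re_powerAverage {w : ℝ → ℝ} (hw : Continuous w)
    (hw₀ : ∀ τ ∈ Icc (0 : ℝ) 1, 0 ≤ w τ) {s : ℂ} {x κ : ℝ} (hx : 0 < x)
    (hκ : ∀ τ ∈ Icc (0 : ℝ) 1, κ ≤ (((1 + τ * (x - 1) : ℝ) : ℂ) ^ s).re) :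
    κ * ∫ τ in (0 : ℝ)..1, w τ ≤ (powerAverage (fun τ => w τ) s x).re := by
  have hint :=
    intervalIntegrable_powerAverage_integrand (p := fun τ => (w τ : ℂ)) (by fun_prop) s hx
  rw [powerAverage, ← reCLM_apply, ← reCLM.intervalIntegral_comp_comm hint,
    ← intervalIntegral.integral_const_mul]
  refine intervalIntegral.integral_mono_on zero_le_one
    ((hw.intervalIntegrable 0 1).const_mul κ) ?_ fun τ hτ => ?_
  · exact (continuous_re.comp_continuousOn
      (continuousOn_powerAverage_integrand (p := fun τ => (w τ : ℂ)) (by fun_prop) s hx))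
      |>.intervalIntegrable_of_Icc zero_le_one
  · rw [reCLM_apply, re_ofReal_mul, mul_comm κ]
    exact mul_le_mul_of_nonneg_left (hκ τ hτ) (hw₀ τ hτ)

lemma hatU_congr (ν : ℂ) {f g : ℝ → ℂ} {U : Set ℝ} (hU : IsOpen U) (h : EqOn f g U) :
    EqOn (hatU ν f) (hatU ν g) U := by
  have hd : EqOn (deriv f) (deriv g) U := fun y hy =>
    (h.eventuallyEq_of_mem (hU.mem_nhds hy)).deriv_eq
  intro x hx
  simp only [hatU, hd hx, (hd.eventuallyEq_of_mem (hU.mem_nhds hx)).deriv_eq]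

lemma hatU_const_mul (ν c : ℂ) (f : ℝ → ℂ) :
    hatU ν (fun x => c * f x) = fun x => c * hatU ν f x := by
  funext x
  simp only [hatU, deriv_const_mul_field']
  ring

lemma hatU_apply_of_hasDerivAt {ν : ℂ} {f f' : ℝ → ℂ} {f'' : ℂ} {x : ℝ}
    (hf : ∀ᶠ y in 𝓝 x, HasDerivAt f (f' y) y) (hf' : HasDerivAt f' f'' x) :
    hatU ν f x = I * ((ν - 1) * f' x - x * f'') := by
  have hd : deriv f =ᶠ[𝓝 x] f' := hf.mono fun y hy => hy.deriv
  simp only [hatU, hd.self_of_nhds, hd.deriv_eq, hf'.deriv]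

lemma hatU_sum {ι : Type*} (ν : ℂ) (S : Finset ι) {f : ι → ℝ → ℂ} {x : ℝ}
    (hf : ∀ m ∈ S, ∀ᶠ y in 𝓝 x, DifferentiableAt ℝ (f m) y)
    (hf' : ∀ m ∈ S, DifferentiableAt ℝ (deriv (f m)) x) :
    hatU ν (fun y => ∑ m ∈ S, f m y) x = ∑ m ∈ S, hatU ν (f m) x := by
  have hd : deriv (fun y => ∑ m ∈ S, f m y) =ᶠ[𝓝 x] fun y => ∑ m ∈ S, deriv (f m) y :=
    ((Filter.eventually_all_finset S).2 hf).mono fun y hy => deriv_fun_sum hy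
  simp only [hatU, hd.self_of_nhds, hd.deriv_eq, deriv_fun_sum hf', Finset.mul_sum,
    ← Finset.sum_sub_distrib]

theorem hatU_powerAverage {p : ℝ → ℂ} (hp : Continuous p) (ν k : ℂ) {x : ℝ} (hx : 0 < x) :
    hatU ν (powerAverage p (ν - k)) x =
      powerAverage (fun τ => I * (ν - k) * k * τ * p τ) (ν - k - 1) x +
        powerAverage (fun τ => I * (ν - k) * (ν - k - 1) * (τ * (1 - τ)) * p τ) (ν - k - 2) x := by
  have hd : ∀ᶠ y in 𝓝 x, HasDerivAt (powerAverage p (ν - k))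
      (powerAverage (fun τ => (ν - k) * τ * p τ) (ν - k - 1) y) y :=
    Filter.mem_of_superset (Ioi_mem_nhds hx) fun y hy => hasDerivAt_powerAverage hp _ hy
  rw [hatU_apply_of_hasDerivAt hd (hasDerivAt_powerAverage (by fun_prop) _ hx)]
  simp only [powerAverage]
  rw [← intervalIntegral.integral_const_mul, ← intervalIntegral.integral_const_mul,
    ← intervalIntegral.integral_sub, ← intervalIntegral.integral_const_mul,
    ← intervalIntegral.integral_add]
  · refine intervalIntegral.integral_congr fun τ hτ => ?_
    have hB : ((1 + τ * (x - 1) : ℝ) : ℂ) ≠ 0 := ofReal_ne_zero.2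
      (one_add_mul_sub_one_pos hx (uIcc_of_le (zero_le_one' ℝ) ▸ hτ)).ne'
    have hpow : ((1 + τ * (x - 1) : ℝ) : ℂ) ^ (ν - k - 1) =
        ((1 + τ * (x - 1) : ℝ) : ℂ) ^ (ν - k - 2) * ((1 + τ * (x - 1) : ℝ) : ℂ) := by
      rw [← cpow_add_one hB]; ring_nf
    simp only [hpow, show ν - k - 1 - 1 = ν - k - 2 by ring]
    -- with `y = 1 + τ (x - 1)`, this is `τ x = y - (1 - τ)`
    push_cast
    ring
  all_goals first
    | exact intervalIntegrable_powerAverage_integrand (by fun_prop) _ hx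
    | exact (intervalIntegrable_powerAverage_integrand (by fun_prop) _ hx).const_mul _

/-- Index `m` carries the power `y^(ν-m)`: in `Û` of `∑ₘ powerAverage (p m) (ν - m)`, the
weight `p (m + 1)` reaches index `m + 2` through the first term of `Û y^s`, and `p m` through
the second. -/
noncomputable def stepCoeff (ν : ℂ) (p : ℕ → ℝ → ℂ) : ℕ → ℝ → ℂ
  | 0 => 0
  | 1 => 0
  | m + 2 => fun τ => I * (ν - ↑(m + 1)) * ↑(m + 1) * τ * p (m + 1) τ +
      I * (ν - m) * (ν - m - 1) * (τ * (1 - τ)) * p m τ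

noncomputable def coeff (ν : ℂ) : ℕ → ℕ → ℝ → ℂ
  | 0 => fun m _ => if m = 0 then 1 else 0
  | β + 1 => stepCoeff ν (coeff ν β)

lemma continuous_stepCoeff (ν : ℂ) {p : ℕ → ℝ → ℂ} (hp : ∀ m, Continuous (p m)) :
    ∀ m, Continuous (stepCoeff ν p m)
  | 0 => continuous_const
  | 1 => continuous_const
  | m + 2 => by have := hp m; have := hp (m + 1); simp only [stepCoeff]; fun_prop

lemma continuous_coeff (ν : ℂ) : ∀ β m, Continuous (coeff ν β m)
  | 0, _ => continuous_const
  | β + 1, _ => continuous_stepCoeff ν (continuous_coeff ν β) _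

lemma coeff_eq_zero_of_lt (ν : ℂ) : ∀ {β m : ℕ}, 2 * β < m → coeff ν β m = 0
  | 0, m, h => by funext; simp [coeff, Nat.pos_iff_ne_zero.1 h]
  | β + 1, m + 2, h => by
    funext τ
    simp [coeff, stepCoeff, coeff_eq_zero_of_lt ν (β := β) (m := m + 1) (by omega),
      coeff_eq_zero_of_lt ν (β := β) (m := m) (by omega)]
  | β + 1, 0, h | β + 1, 1, h => by omega

lemma sum_powerAverage_stepCoeff (ν : ℂ) {N : ℕ} {p : ℕ → ℝ → ℂ} (hp : ∀ m, Continuous (p m))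
    (hN : p N = 0) {x : ℝ} (hx : 0 < x) :
    ∑ m ∈ Finset.range (N + 2), powerAverage (stepCoeff ν p m) (ν - m) x =
      ∑ m ∈ Finset.range N,
        (powerAverage (fun τ => I * (ν - m) * m * τ * p m τ) (ν - m - 1) x +
          powerAverage (fun τ => I * (ν - m) * (ν - m - 1) * (τ * (1 - τ)) * p m τ)
            (ν - m - 2) x) := by
  set A : ℕ → ℂ := fun m => powerAverage (fun τ => I * (ν - m) * m * τ * p m τ) (ν - m - 1) x
  have hA0 : A 0 = 0 := by simp [A, ← Pi.zero_def, powerAverage_zero]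
  have hAN : A N = 0 := by simp [A, hN, ← Pi.zero_def, powerAverage_zero]
  have hshift : ∑ m ∈ Finset.range N, A (m + 1) = ∑ m ∈ Finset.range N, A m := by
    have h₁ := Finset.sum_range_succ' A N
    have h₂ := Finset.sum_range_succ A N
    rw [hA0, add_zero] at h₁
    rw [hAN, add_zero] at h₂
    rw [← h₁, h₂]
  rw [Finset.sum_range_succ', Finset.sum_range_succ', Finset.sum_add_distrib, ← hshift]
  simp only [stepCoeff, powerAverage_zero, add_zero, ← Finset.sum_add_distrib]
  refine Finset.sum_congr rfl fun m _ => ?_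
  rw [powerAverage_add (by have := hp (m + 1); fun_prop) (by have := hp m; fun_prop) _ hx]
  congr 2 <;> push_cast <;> ring

theorem hatU_sum_powerAverage (ν : ℂ) {N : ℕ} {p : ℕ → ℝ → ℂ} (hp : ∀ m, Continuous (p m))
    (hN : p N = 0) {x : ℝ} (hx : 0 < x) :
    hatU ν (fun y => ∑ m ∈ Finset.range N, powerAverage (p m) (ν - m) y) x =
      ∑ m ∈ Finset.range (N + 2), powerAverage (stepCoeff ν p m) (ν - m) x := by
  rw [hatU_sum, sum_powerAverage_stepCoeff ν hp hN hx]
  · exact Finset.sum_congr rfl fun m _ => hatU_powerAverage (hp m) ν m hx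
  · exact fun m _ => Filter.mem_of_superset (Ioi_mem_nhds hx) fun y hy =>
      (hasDerivAt_powerAverage (hp m) _ hy).differentiableAt
  · exact fun m _ => (hasDerivAt_powerAverage (by have := hp m; fun_prop) _ hx).differentiableAt
      |>.congr_of_eventuallyEq (eventuallyEq_deriv_powerAverage (hp m) _ hx)

lemma ffun_eq_powerAverage (q : ℝ → ℂ) (hone : EqOn q 1 (Icc 1 (5 / 4))) (a lam : ℝ) {x : ℝ}
    (hx : x ∈ Ioo (1 : ℝ) (5 / 4)) :
    ffun q a lam x = -I / lam * (I * a + 1) * powerAverage (fun _ => 1) (I * a) x := by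
  have hx0 : (0 : ℝ) < x := by linarith [hx.1]
  have hx1 : (x : ℂ) - 1 ≠ 0 := sub_ne_zero.2 (mod_cast hx.1.ne')
  have hg : gfun q a x = ((x : ℂ) - 1) * ((I * a + 1) * powerAverage (fun _ => 1) (I * a) x) := by
    rw [mul_left_comm, ← mul_assoc, mul_powerAverage_one _ hx0, gfun, if_pos hx0,
      hone ⟨hx.1.le, hx.2.le⟩, Pi.one_apply, one_mul]
  rw [ffun, if_neg hx.1.ne', mul_div_mul_comm, hg, mul_div_cancel_left₀ _ hx1, mul_assoc]

theorem iterate_hatU_ffun_eqOn (q : ℝ → ℂ) (hone : EqOn q 1 (Icc 1 (5 / 4))) (a lam : ℝ) (β : ℕ) :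
    EqOn ((hatU (I * a))^[β] (ffun q a lam))
      (fun x => -I / lam * (I * a + 1) *
        ∑ m ∈ Finset.range (2 * β + 1), powerAverage (coeff (I * a) β m) (I * a - m) x)
      (Ioo 1 (5 / 4)) := by
  induction β with
  | zero =>
    intro x hx
    simp [coeff, ffun_eq_powerAverage q hone a lam hx]
  | succ β ih =>
    intro x hx
    rw [Function.iterate_succ_apply', hatU_congr _ isOpen_Ioo ih hx, hatU_const_mul]
    dsimp only
    rw [hatU_sum_powerAverage _ (continuous_coeff _ β) (coeff_eq_zero_of_lt _ (by omega))
        (by linarith [hx.1])]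
    rfl

noncomputable def topFactor (ν : ℂ) (β : ℕ) : ℂ :=
  ∏ j ∈ Finset.range β, I * (ν - ↑(2 * j)) * (ν - ↑(2 * j) - 1)

lemma coeff_two_mul (ν : ℂ) (β : ℕ) (τ : ℝ) :
    coeff ν β (2 * β) τ = topFactor ν β * (τ * (1 - τ)) ^ β := by
  induction β with
  | zero => simp [coeff, topFactor]
  | succ β ih =>
    rw [show 2 * (β + 1) = 2 * β + 2 by ring]
    simp only [coeff, stepCoeff, ih, coeff_eq_zero_of_lt ν (show 2 * β < 2 * β + 1 by omega),
      topFactor, Finset.prod_range_succ, Pi.zero_apply]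
    push_cast
    ring

lemma abs_im_pow_le_norm_topFactor (ν : ℂ) (β : ℕ) : |ν.im| ^ (2 * β) ≤ ‖topFactor ν β‖ := by
  have him : ∀ z : ℂ, z.im = ν.im → |ν.im| ≤ ‖z‖ := fun z hz => hz ▸ abs_im_le_norm z
  have hpow : |ν.im| ^ (2 * β) = ∏ _j ∈ Finset.range β, |ν.im| ^ 2 := by
    rw [Finset.prod_const, Finset.card_range, ← pow_mul, mul_comm]
  rw [hpow, topFactor, norm_prod]
  refine Finset.prod_le_prod (fun _ _ => by positivity) fun j _ => ?_
  rw [norm_mul, norm_mul, norm_I, one_mul, sq]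
  exact mul_le_mul (him _ (by simp)) (him _ (by simp)) (abs_nonneg _) (norm_nonneg _)

noncomputable def coeffBound (β : ℕ) : ℝ := ∏ j ∈ Finset.range β, (4 * (j : ℝ) + 6)

lemma coeffBound_pos (β : ℕ) : 0 < coeffBound β :=
  Finset.prod_pos fun _ _ => by positivity

lemma norm_sub_natCast_le {ν : ℂ} {n : ℕ} (hn : (n : ℝ) ≤ ‖ν‖) : ‖ν - n‖ ≤ 2 * ‖ν‖ := by
  calc ‖ν - n‖ ≤ ‖ν‖ + n := by simpa using norm_sub_le ν n
    _ ≤ 2 * ‖ν‖ := by linarith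

lemma norm_stepCoeff_le {ν : ℂ} {p : ℕ → ℝ → ℂ} {n : ℕ} {K τ : ℝ} (hτ : τ ∈ Icc (0 : ℝ) 1)
    (hn : (n : ℝ) + 1 ≤ ‖ν‖) (hp0 : ∀ m, n < m → p m = 0) (hp : ∀ m, ‖p m τ‖ ≤ K * ‖ν‖ ^ m)
    (m : ℕ) : ‖stepCoeff ν p m τ‖ ≤ (2 * n + 6) * K * ‖ν‖ ^ m := by
  have hK : 0 ≤ K := by simpa using (norm_nonneg _).trans (hp 0)
  have hτ₁ : ‖(τ : ℂ)‖ ≤ 1 := by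
    rw [norm_real, Real.norm_eq_abs, abs_le]; constructor <;> linarith [hτ.1, hτ.2]
  have hτ₂ : ‖(τ : ℂ)‖ * ‖1 - (τ : ℂ)‖ ≤ 1 := by
    rw [← norm_mul, ← ofReal_one, ← ofReal_sub, ← ofReal_mul, norm_real, Real.norm_eq_abs, abs_le]
    constructor <;> nlinarith [hτ.1, hτ.2]
  match m with
  | 0 | 1 => simp only [stepCoeff, Pi.zero_apply, norm_zero]; positivity
  | k + 2 =>
    by_cases hk : n < k
    · simp [stepCoeff, hp0 k hk, hp0 (k + 1) (by omega)]; positivity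
    have hk' : (k : ℝ) ≤ n := by exact_mod_cast not_lt.1 hk
    have h₁ : ‖ν - ↑(k + 1)‖ ≤ 2 * ‖ν‖ := norm_sub_natCast_le (by push_cast; linarith)
    have h₂ : ‖ν - k‖ ≤ 2 * ‖ν‖ := norm_sub_natCast_le (by linarith)
    have h₃ : ‖ν - k - 1‖ ≤ 2 * ‖ν‖ := by
      simpa [sub_sub] using norm_sub_natCast_le (ν := ν) (n := k + 1) (by push_cast; linarith)
    have h₄ : ‖((k + 1 : ℕ) : ℂ)‖ ≤ n + 1 := by rw [norm_natCast]; push_cast; linarith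
    simp only [stepCoeff]
    refine (norm_add_le _ _).trans ?_
    simp only [norm_mul, norm_I, one_mul]
    calc ‖ν - ↑(k + 1)‖ * ‖((k + 1 : ℕ) : ℂ)‖ * ‖(τ : ℂ)‖ * ‖p (k + 1) τ‖ +
          ‖ν - k‖ * ‖ν - k - 1‖ * (‖(τ : ℂ)‖ * ‖1 - (τ : ℂ)‖) * ‖p k τ‖
        ≤ 2 * ‖ν‖ * (n + 1) * 1 * (K * ‖ν‖ ^ (k + 1)) +
          2 * ‖ν‖ * (2 * ‖ν‖) * 1 * (K * ‖ν‖ ^ k) := by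
          gcongr <;> exact hp _
      _ = (2 * n + 6) * K * ‖ν‖ ^ (k + 2) := by ring

lemma norm_coeff_le {ν : ℂ} {β : ℕ} (hβ : 2 * (β : ℝ) ≤ ‖ν‖) (m : ℕ) {τ : ℝ}
    (hτ : τ ∈ Icc (0 : ℝ) 1) : ‖coeff ν β m τ‖ ≤ coeffBound β * ‖ν‖ ^ m := by
  induction β generalizing m with
  | zero => by_cases hm : m = 0 <;> simp [coeff, coeffBound, hm]
  | succ β ih =>
    have h := norm_stepCoeff_le hτ (by push_cast at hβ ⊢; linarith)
      (fun m hm => coeff_eq_zero_of_lt ν hm) (ih (by push_cast at hβ; linarith)) m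
    rw [coeffBound, Finset.prod_range_succ, ← coeffBound]
    push_cast at h
    exact h.trans_eq (by ring)

lemma cos_one_div_le_re_cpow {a y : ℝ} (n : ℕ) (hy₁ : 1 ≤ y) (hy₂ : y ≤ 2)
    (ha : |a * Real.log y| ≤ 1) : Real.cos 1 / 2 ^ n ≤ ((y : ℂ) ^ (I * a - n)).re := by
  have hy₀ : (y : ℂ) ≠ 0 := ofReal_ne_zero.2 (by linarith)
  have hre : ((y : ℂ) ^ (I * a - n)).re = Real.cos (a * Real.log y) / y ^ n := by
    rw [cpow_sub _ _ hy₀, cpow_natCast, cpow_def_of_ne_zero hy₀, ← ofReal_log (by linarith),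
      ← ofReal_pow, div_ofReal_re,
      show (Real.log y : ℂ) * (I * a) = ((a * Real.log y : ℝ) : ℂ) * I by push_cast; ring,
      exp_ofReal_mul_I_re]
  have hcos : Real.cos 1 ≤ Real.cos (a * Real.log y) := by
    rw [← Real.cos_abs (a * Real.log y)]
    exact Real.cos_le_cos_of_nonneg_of_le_pi (abs_nonneg _) (by linarith [Real.pi_gt_three]) ha
  rw [hre]
  exact div_le_div₀ (Real.cos_one_pos.le.trans hcos) hcos (by positivity)
    (pow_le_pow_left₀ (by linarith) hy₂ n)

lemma mem_Icc_one_two_and_abs_mul_log_le {a x τ : ℝ} (ha : 1 ≤ |a|) (hx : x ∈ Ioo 1 (1 + 1 / |a|))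
    (hτ : τ ∈ Icc (0 : ℝ) 1) :
    1 + τ * (x - 1) ∈ Icc (1 : ℝ) 2 ∧ |a * Real.log (1 + τ * (x - 1))| ≤ 1 := by
  have ha₀ : 0 < |a| := by linarith
  have hxa : (x - 1) * |a| ≤ 1 := ((lt_div_iff₀ ha₀).1 (by linarith [hx.2])).le
  have hy₁ : 1 ≤ 1 + τ * (x - 1) := by nlinarith [hτ.1, hx.1]
  have hyx : 1 + τ * (x - 1) ≤ x := by nlinarith [hτ.2, hx.1]
  have hlog := Real.log_le_sub_one_of_pos (show 0 < 1 + τ * (x - 1) by linarith)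
  refine ⟨⟨hy₁, by nlinarith⟩, ?_⟩
  rw [abs_mul, abs_of_nonneg (Real.log_nonneg hy₁)]
  nlinarith

noncomputable def mainConst (β : ℕ) : ℝ :=
  Real.cos 1 / 2 ^ (2 * β) * ∫ τ in (0 : ℝ)..1, (τ * (1 - τ)) ^ β

lemma mainConst_pos (β : ℕ) : 0 < mainConst β := by
  refine mul_pos (div_pos Real.cos_one_pos (by positivity)) ?_
  refine intervalIntegral.intervalIntegral_pos_of_pos_on
    (Continuous.intervalIntegrable (by fun_prop) _ _) (fun τ hτ => ?_) zero_lt_one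
  have := hτ.1; have := hτ.2
  have : 0 < 1 - τ := by linarith
  positivity

lemma mainConst_mul_le_norm_powerAverage_top (β : ℕ) {a x : ℝ} (ha : 1 ≤ |a|)
    (hx : x ∈ Ioo 1 (1 + 1 / |a|)) :
    mainConst β * |a| ^ (2 * β) ≤
      ‖powerAverage (coeff (I * a) β (2 * β)) (I * a - ↑(2 * β)) x‖ := by
  have hcoeff : coeff (I * a) β (2 * β) =
      fun τ => topFactor (I * a) β * (((τ * (1 - τ)) ^ β : ℝ) : ℂ) := by
    funext τ; rw [coeff_two_mul]; push_cast; rfl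
  have hre : mainConst β ≤ (powerAverage (fun τ => (((τ * (1 - τ)) ^ β : ℝ) : ℂ))
      (I * a - ↑(2 * β)) x).re := by
    refine mul_integral_le_re_powerAverage (by fun_prop) (fun τ hτ => ?_) (by linarith [hx.1])
      fun τ hτ => ?_
    · have := hτ.1; have : 0 ≤ 1 - τ := by linarith [hτ.2]
      positivity
    · obtain ⟨⟨hy₁, hy₂⟩, hlog⟩ := mem_Icc_one_two_and_abs_mul_log_le ha hx hτ
      exact cos_one_div_le_re_cpow _ hy₁ hy₂ hlog
  rw [hcoeff, powerAverage_const_mul, norm_mul, mul_comm]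
  refine mul_le_mul ?_ (hre.trans ((le_abs_self _).trans (abs_re_le_norm _)))
    (mainConst_pos β).le (norm_nonneg _)
  simpa using abs_im_pow_le_norm_topFactor (I * a) β

lemma mul_norm_sum_powerAverage_coeff_le (β : ℕ) {a x : ℝ} (ha : 1 ≤ |a|) (hβ : 2 * (β : ℝ) ≤ |a|)
    (hx : 1 ≤ x) :
    |a| * ‖∑ m ∈ Finset.range (2 * β), powerAverage (coeff (I * a) β m) (I * a - m) x‖ ≤
      2 * β * coeffBound β * |a| ^ (2 * β) := by
  have hν : ‖I * (a : ℂ)‖ = |a| := by simp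
  have hterm : ∀ m ∈ Finset.range (2 * β),
      |a| * ‖powerAverage (coeff (I * a) β m) (I * a - m) x‖ ≤ coeffBound β * |a| ^ (2 * β) := by
    intro m hm
    have hG : ‖powerAverage (coeff (I * a) β m) (I * a - m) x‖ ≤ coeffBound β * |a| ^ m :=
      norm_powerAverage_le (fun τ hτ => hν ▸ norm_coeff_le (hν ▸ hβ) m hτ) (by simp) hx
    calc |a| * ‖powerAverage (coeff (I * a) β m) (I * a - m) x‖
        ≤ |a| * (coeffBound β * |a| ^ m) := by gcongr
      _ = coeffBound β * |a| ^ (m + 1) := by ring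
      _ ≤ coeffBound β * |a| ^ (2 * β) :=
        mul_le_mul_of_nonneg_left (pow_le_pow_right₀ ha (Finset.mem_range.1 hm))
          (coeffBound_pos β).le
  calc |a| * ‖∑ m ∈ Finset.range (2 * β), powerAverage (coeff (I * a) β m) (I * a - m) x‖
      ≤ ∑ m ∈ Finset.range (2 * β), |a| * ‖powerAverage (coeff (I * a) β m) (I * a - m) x‖ := by
        rw [← Finset.mul_sum]; gcongr; exact norm_sum_le _ _
    _ ≤ ∑ _m ∈ Finset.range (2 * β), coeffBound β * |a| ^ (2 * β) := Finset.sum_le_sum hterm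
    _ = 2 * β * coeffBound β * |a| ^ (2 * β) := by simp; ring

theorem norm_iterate_hatU_ffun_ge (q : ℝ → ℂ) (hone : EqOn q 1 (Icc 1 (5 / 4))) (β : ℕ)
    {a lam : ℝ} (ha : 4 ≤ |a|) (hβ : 2 * (β : ℝ) ≤ |a|)
    (hK : 4 * β * coeffBound β ≤ mainConst β * |a|) {x : ℝ} (hx : x ∈ Ioo 1 (1 + 1 / |a|)) :
    mainConst β / 2 * |a| ^ (2 * β + 1) / |lam| ≤ ‖(hatU (I * a))^[β] (ffun q a lam) x‖ := by
  have hx' : x ∈ Ioo (1 : ℝ) (5 / 4) :=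
    ⟨hx.1, hx.2.trans_le (by linarith [one_div_le_one_div_of_le (by norm_num) ha])⟩
  rw [iterate_hatU_ffun_eqOn q hone a lam β hx']
  dsimp only
  rw [Finset.sum_range_succ, norm_mul]
  set E := ∑ m ∈ Finset.range (2 * β), powerAverage (coeff (I * a) β m) (I * a - m) x
  set T := powerAverage (coeff (I * a) β (2 * β)) (I * a - ↑(2 * β)) x
  have hT := mainConst_mul_le_norm_powerAverage_top β (by linarith) hx
  have hE := mul_norm_sum_powerAverage_coeff_le β (by linarith) hβ hx.1.le
  have hE' : ‖E‖ ≤ mainConst β / 2 * |a| ^ (2 * β) := by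
    refine le_of_mul_le_mul_left ?_ (show 0 < |a| by linarith)
    nlinarith [mul_le_mul_of_nonneg_right hK (pow_nonneg (abs_nonneg a) (2 * β))]
  have hS : mainConst β / 2 * |a| ^ (2 * β) ≤ ‖E + T‖ := by
    have h := norm_add_le (E + T) (-E)
    rw [add_neg_cancel_comm, norm_neg] at h
    linarith
  have hc : |a| / |lam| ≤ ‖-I / lam * (I * a + 1)‖ := by
    rw [norm_mul, norm_div, norm_neg, norm_I, norm_real, Real.norm_eq_abs, one_div_mul_eq_div]
    gcongr
    simpa using abs_im_le_norm (I * a + 1)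
  calc mainConst β / 2 * |a| ^ (2 * β + 1) / |lam|
      = |a| / |lam| * (mainConst β / 2 * |a| ^ (2 * β)) := by ring
    _ ≤ ‖-I / lam * (I * a + 1)‖ * ‖E + T‖ :=
      mul_le_mul hc hS (by have := mainConst_pos β; positivity) (norm_nonneg _)

lemma ofReal_mul_sqrt_le_L2 {h : ℝ → ℂ} {u v D : ℝ} (hD : 0 ≤ D) (huv : u ≤ v)
    (hh : ∀ x ∈ Ioo u v, D ≤ ‖h x‖) : ENNReal.ofReal (D * √(v - u)) ≤ L2 h (Icc u v) := by
  have hint : ENNReal.ofReal (D ^ 2 * (v - u)) ≤ ∫⁻ x in Icc u v, ENNReal.ofReal (‖h x‖ ^ 2) :=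
    calc ENNReal.ofReal (D ^ 2 * (v - u)) = ∫⁻ _ in Ioo u v, ENNReal.ofReal (D ^ 2) := by
          rw [setLIntegral_const, Real.volume_Ioo, ← ENNReal.ofReal_mul (by positivity)]
      _ ≤ ∫⁻ x in Ioo u v, ENNReal.ofReal (‖h x‖ ^ 2) :=
          setLIntegral_mono' measurableSet_Ioo fun x hx =>
            ENNReal.ofReal_le_ofReal (pow_le_pow_left₀ hD (hh x hx) 2)
      _ ≤ ∫⁻ x in Icc u v, ENNReal.ofReal (‖h x‖ ^ 2) := lintegral_mono_set Ioo_subset_Icc_self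
  rw [L2]
  calc ENNReal.ofReal (D * √(v - u)) = ENNReal.ofReal (D ^ 2 * (v - u)) ^ (1 / 2 : ℝ) := by
        rw [ENNReal.ofReal_rpow_of_nonneg (by nlinarith) (by norm_num), ← Real.sqrt_eq_rpow,
          Real.sqrt_mul (sq_nonneg D), Real.sqrt_sq hD]
    _ ≤ _ := ENNReal.rpow_le_rpow hint (by norm_num)

end TwistedSolution

open TwistedSolution in
theorem twisted_solution_lower_bound_general (β : ℕ) (q : ℝ → ℂ)
    (hone : Set.EqOn q 1 (Set.Icc (1 : ℝ) (5 / 4))) :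
    ∃ c > 4, ∃ C > 0, ∀ lam : ℝ, lam ≠ 0 → ∀ a : ℝ, c ≤ |a| →
      ENNReal.ofReal (C / |lam| * |a| ^ (2 * (β : ℝ) + 1 / 2)) ≤
        L2 ((hatU (Complex.I * a))^[β] (ffun q a lam))
          (Set.Icc (1 : ℝ) (1 + 1 / |a|)) := by
  have hM := mainConst_pos β
  have hK : 0 ≤ 4 * β * coeffBound β / mainConst β := by have := coeffBound_pos β; positivity
  refine ⟨5 + 2 * β + 4 * β * coeffBound β / mainConst β, by linarith, mainConst β / 2,
    by positivity, fun lam _ a ha => ?_⟩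
  have ha₀ : 0 < |a| := by linarith
  have hbound (x : ℝ) (hx : x ∈ Set.Ioo 1 (1 + 1 / |a|)) :=
    norm_iterate_hatU_ffun_ge q hone β (lam := lam) (by linarith) (by linarith)
      (by rw [← div_le_iff₀' hM]; linarith) hx
  refine le_of_eq_of_le ?_ (ofReal_mul_sqrt_le_L2 (by positivity)
    (le_add_of_nonneg_right (by positivity)) hbound)
  congr 1
  have hpow : |a| ^ (2 * (β : ℝ) + 1 / 2) = |a| ^ (2 * β + 1) * √(1 / |a|) := by
    rw [Real.sqrt_eq_rpow, one_div |a|, Real.inv_rpow ha₀.le, ← Real.rpow_neg ha₀.le,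
      ← Real.rpow_natCast, ← Real.rpow_add ha₀]
    push_cast
    ring_nf
  rw [add_sub_cancel_left, hpow]
  ring

/-- Lower bound for the solution of the twisted equation:
`‖Û^β f‖_{L²(I_ν)} ≥ (C/|λ|)·|a|^{2β+1/2}` for `|a| ≥ c`, where `I_ν = [1, 1+1/|a|]`. -/
theorem twisted_solution_lower_bound (β : ℕ) (q : ℝ → ℂ)
    (hq : ContDiff ℝ (⊤ : ℕ∞) q)
    (hsupp : Function.support q ⊆ Set.Icc (3 / 4 : ℝ) (4 / 3))
    (hone : Set.EqOn q 1 (Set.Icc (1 : ℝ) (5 / 4))) :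
    ∃ c > 4, ∃ C > 0, ∀ lam : ℝ, lam ≠ 0 → ∀ a : ℝ, c ≤ |a| →
      ENNReal.ofReal (C / |lam| * |a| ^ (2 * (β : ℝ) + 1 / 2)) ≤
        L2 ((hatU (Complex.I * a))^[β] (ffun q a lam))
          (Set.Icc (1 : ℝ) (1 + 1 / |a|)) :=
  twisted_solution_lower_bound_general β q hone
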